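/- In the non-adaptive single-copy measurement model, the mutual information between the random label (a,s) (index of state ρ_{(a,s)} = (I + sP_a)/2^n, uniform over non-identity Paulis and signs) and the outcome o of any rank-one POVM {w_j 2^n |ψ_j⟩⟨ψ_j|} on a single copy of ρ_{(a,s)} is at most 1/(2^n + 1). -/

import Mathlib

open Matrix BigOperators

/-- The single-qubit Pauli matrices `I, X, Y, Z`. -/
noncomputable def pauliM : Fin 4 → Matrix (Fin 2) (Fin 2) ℂ
  | 0 => 1
  | 1 => !![0, 1; 1, 0]
  | 2 => !![0, -Complex.I; Complex.I, 0]
  | 3 => !![1, 0; 0, -1]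

/-- The `n`-qubit Pauli operator `P_a = σ_{a 1} ⊗ ⋯ ⊗ σ_{a n}`. -/
noncomputable def nPauli {n : ℕ} (a : Fin n → Fin 4) :
    Matrix (Fin n → Fin 2) (Fin n → Fin 2) ℂ :=
  fun x y => ∏ i, pauliM (a i) (x i) (y i)

/-- The expectation value `⟨ψ|M|ψ⟩`. -/
noncomputable def expval {d : Type*} [Fintype d] (ψ : d → ℂ) (M : Matrix d d ℂ) : ℂ :=
  ∑ x, ∑ y, (starRingEnd ℂ) (ψ x) * M x y * ψ y

/-- The state `ρ_{(a,s)} = (I + s P_a)/2ⁿ`. -/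
noncomputable def mixedPauliState {n : ℕ} (a : Fin n → Fin 4) (s : ℝ) :
    Matrix (Fin n → Fin 2) (Fin n → Fin 2) ℂ :=
  ((2 : ℂ) ^ n)⁻¹ • (1 + (s : ℂ) • nPauli a)

/-- Outcome probabilities `p_{(a,s)}(j) = w_j 2ⁿ ⟨ψ_j|ρ_{(a,s)}|ψ_j⟩` of the
rank-one POVM `{w_j 2ⁿ |ψ_j⟩⟨ψ_j|}` on the state `ρ_{(a,s)}`. -/
noncomputable def outcomeProb {n : ℕ} {J : Type*} [Fintype J]
    (w : J → ℝ) (ψ : J → (Fin n → Fin 2) → ℂ) (a : Fin n → Fin 4) (s : ℝ) (j : J) : ℝ :=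
  w j * 2 ^ n * (expval (ψ j) (mixedPauliState a s)).re

/-!
Write `r_j(a) = ⟨ψ_j|P_a|ψ_j⟩`, a real number in `[-1, 1]`. Then `p_{(a,s)}(j) = w_j (1 + s r_j(a))`,
so averaging over the sign alone already gives the marginal `w_j`. By `log u ≤ u - 1`, the term
`p log p - p log w_j` is at most `w_j u (u - 1)` with `u = 1 + s r_j(a)`, whose average over `s` is
`w_j r_j(a)²`. Completeness of the Pauli basis gives `∑_a r_j(a)² = 2ⁿ` for a unit vector, that is
`2ⁿ - 1` over the non-identity Paulis, so the mutual information is at most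
`(2ⁿ - 1)/(4ⁿ - 1) = 1/(2ⁿ + 1)`.
-/

open Finset Real
open scoped ComplexOrder

lemma pauliM_isHermitian (c : Fin 4) : (pauliM c).IsHermitian := by
  refine IsHermitian.ext fun u v => ?_
  fin_cases c <;> fin_cases u <;> fin_cases v <;> simp [pauliM]

lemma pauliM_mul_self (c : Fin 4) : pauliM c * pauliM c = 1 := by
  fin_cases c <;> ext u v <;> fin_cases u <;> fin_cases v <;>
    simp [pauliM, one_apply, mul_apply, Fin.sum_univ_two]

lemma sum_pauliM_mul_conj (u v u' v' : Fin 2) :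
    ∑ c, pauliM c u v * starRingEnd ℂ (pauliM c u' v') = if u = u' ∧ v = v' then 2 else 0 := by
  fin_cases u <;> fin_cases v <;> fin_cases u' <;> fin_cases v' <;>
    simp [pauliM, Fin.sum_univ_four] <;> norm_num

section nPauli

variable {n : ℕ}

lemma nPauli_isHermitian (a : Fin n → Fin 4) : (nPauli a).IsHermitian :=
  IsHermitian.ext fun x y => by
    simp only [nPauli, star_prod]
    exact prod_congr rfl fun i _ => (pauliM_isHermitian (a i)).apply (x i) (y i)

lemma nPauli_mul_self (a : Fin n → Fin 4) : nPauli a * nPauli a = 1 := by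
  ext x y
  simp only [mul_apply, nPauli, ← prod_mul_distrib]
  rw [← Fintype.prod_sum fun i u => pauliM (a i) (x i) u * pauliM (a i) u (y i)]
  simp only [← mul_apply, pauliM_mul_self, one_apply, Fintype.prod_boole]
  congr 1
  exact propext funext_iff.symm

lemma nPauli_zero : nPauli (fun _ => 0 : Fin n → Fin 4) = 1 := by
  ext x y
  simp [nPauli, pauliM, one_apply, Fintype.prod_boole, funext_iff]

lemma sum_nPauli_mul_conj (x y x' y' : Fin n → Fin 2) :
    ∑ a : Fin n → Fin 4, nPauli a x y * starRingEnd ℂ (nPauli a x' y') =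
      if x = x' ∧ y = y' then 2 ^ n else 0 := by
  simp only [nPauli, map_prod, ← prod_mul_distrib]
  rw [← Fintype.prod_sum fun i c => pauliM c (x i) (y i) * starRingEnd ℂ (pauliM c (x' i) (y' i))]
  simp only [sum_pauliM_mul_conj, Fintype.prod_ite_zero, prod_const, card_univ, Fintype.card_fin,
    funext_iff, forall_and]

end nPauli

section expval

variable {d : Type*} [Fintype d]

lemma expval_eq_dotProduct (ψ : d → ℂ) (M : Matrix d d ℂ) : expval ψ M = star ψ ⬝ᵥ M *ᵥ ψ := by
  simp [expval, dotProduct, mulVec, mul_sum, mul_assoc]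

lemma expval_add (ψ : d → ℂ) (M N : Matrix d d ℂ) :
    expval ψ (M + N) = expval ψ M + expval ψ N := by
  simp only [expval_eq_dotProduct, add_mulVec, dotProduct_add]

lemma expval_neg (ψ : d → ℂ) (M : Matrix d d ℂ) : expval ψ (-M) = -expval ψ M := by
  simp only [expval_eq_dotProduct, neg_mulVec, dotProduct_neg]

lemma expval_smul (ψ : d → ℂ) (c : ℂ) (M : Matrix d d ℂ) : expval ψ (c • M) = c * expval ψ M := by
  simp only [expval_eq_dotProduct, smul_mulVec, dotProduct_smul, smul_eq_mul]

lemma expval_one [DecidableEq d] (ψ : d → ℂ) : expval ψ 1 = ((∑ x, ‖ψ x‖ ^ 2 : ℝ) : ℂ) := by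
  simp [expval_eq_dotProduct, dotProduct, Complex.conj_mul']

lemma im_expval_eq_zero {M : Matrix d d ℂ} (hM : M.IsHermitian) (ψ : d → ℂ) :
    (expval ψ M).im = 0 := by
  simpa [expval_eq_dotProduct] using hM.im_star_dotProduct_mulVec_self ψ

lemma re_expval_nonneg {M : Matrix d d ℂ} (hM : M.PosSemidef) (ψ : d → ℂ) :
    0 ≤ (expval ψ M).re := by
  rw [expval_eq_dotProduct]
  exact (Complex.nonneg_iff.mp (hM.dotProduct_mulVec_nonneg ψ)).1

variable [DecidableEq d]

-- `(1 + U)ᴴ (1 + U) = (1 + U)² = 2 (1 + U)`.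
lemma posSemidef_one_add {U : Matrix d d ℂ} (hU : U.IsHermitian) (hU2 : U * U = 1) :
    (1 + U).PosSemidef := by
  have h : 1 + U = (2 : ℝ)⁻¹ • ((1 + U)ᴴ * (1 + U)) := by
    rw [conjTranspose_add, conjTranspose_one, hU.eq, add_mul, mul_add, mul_add, hU2, one_mul,
      mul_one, one_mul, add_comm U 1, ← two_smul ℝ, smul_smul, inv_mul_cancel₀ two_ne_zero,
      one_smul]
  rw [h]
  exact (posSemidef_conjTranspose_mul_self _).smul (by norm_num)

lemma abs_re_expval_le {U : Matrix d d ℂ} (hU : U.IsHermitian) (hU2 : U * U = 1) (ψ : d → ℂ) :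
    |(expval ψ U).re| ≤ ∑ x, ‖ψ x‖ ^ 2 := by
  have hplus := re_expval_nonneg (posSemidef_one_add hU hU2) ψ
  have hminus := re_expval_nonneg (posSemidef_one_add hU.neg (by rw [neg_mul_neg, hU2])) ψ
  simp only [expval_add, expval_neg, expval_one, Complex.add_re, Complex.neg_re,
    Complex.ofReal_re] at hplus hminus
  rw [abs_le]
  constructor <;> linarith

end expval

section nPauli_expval

variable {n : ℕ}

lemma abs_re_expval_nPauli_le {ψ : (Fin n → Fin 2) → ℂ} (hψ : ∑ x, ‖ψ x‖ ^ 2 = 1)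
    (a : Fin n → Fin 4) : |(expval ψ (nPauli a)).re| ≤ 1 :=
  hψ ▸ abs_re_expval_le (nPauli_isHermitian a) (nPauli_mul_self a) ψ

lemma sum_normSq_expval_nPauli (ψ : (Fin n → Fin 2) → ℂ) :
    ∑ a, Complex.normSq (expval ψ (nPauli a)) = 2 ^ n * (∑ x, ‖ψ x‖ ^ 2) ^ 2 := by
  apply Complex.ofReal_injective
  push_cast
  simp only [Complex.normSq_eq_conj_mul_self]
  calc ∑ a, starRingEnd ℂ (expval ψ (nPauli a)) * expval ψ (nPauli a)
      = ∑ x, ∑ y, ∑ x', ∑ y', starRingEnd ℂ (ψ x) * ψ y * ψ x' * starRingEnd ℂ (ψ y') *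
          ∑ a, nPauli a x y * starRingEnd ℂ (nPauli a x' y') := by
        simp only [expval, map_sum, map_mul, Complex.conj_conj, sum_mul, mul_sum]
        rw [sum_comm]
        refine sum_congr rfl fun x _ => ?_
        rw [sum_comm]
        refine sum_congr rfl fun y _ => ?_
        rw [sum_comm]
        refine sum_congr rfl fun x' _ => ?_
        rw [sum_comm]
        exact sum_congr rfl fun y' _ => sum_congr rfl fun a _ => by ring
    _ = ∑ x, ∑ y, 2 ^ n * ((‖ψ x‖ : ℂ) ^ 2 * (‖ψ y‖ : ℂ) ^ 2) := by
        simp only [sum_nPauli_mul_conj, mul_ite, mul_zero, ite_and, sum_ite_irrel, sum_const_zero,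
          sum_ite_eq, mem_univ, if_true, ← Complex.conj_mul']
        exact sum_congr rfl fun x _ => sum_congr rfl fun y _ => by ring
    _ = 2 ^ n * (∑ x, (‖ψ x‖ : ℂ) ^ 2) ^ 2 := by
        rw [sq (∑ x, _), sum_mul_sum]
        simp only [mul_sum]

def nonIdentityPaulis (n : ℕ) : Finset (Fin n → Fin 4) :=
  univ.filter fun a => a ≠ fun _ => 0

lemma card_nonIdentityPaulis (n : ℕ) : (#(nonIdentityPaulis n) : ℝ) = 4 ^ n - 1 := by
  rw [nonIdentityPaulis, filter_ne', card_erase_of_mem (mem_univ _), card_univ, Fintype.card_fun,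
    Fintype.card_fin, Fintype.card_fin, Nat.cast_sub (Nat.one_le_pow _ _ (by norm_num))]
  push_cast
  rfl

lemma nonIdentityPaulis_nonempty (hn : 0 < n) : (nonIdentityPaulis n).Nonempty :=
  ⟨fun _ => 1, mem_filter.mpr ⟨mem_univ _, fun h => by simpa using congrFun h ⟨0, hn⟩⟩⟩

lemma sum_nonIdentityPaulis_re_expval_sq {ψ : (Fin n → Fin 2) → ℂ} (hψ : ∑ x, ‖ψ x‖ ^ 2 = 1) :
    ∑ a ∈ nonIdentityPaulis n, (expval ψ (nPauli a)).re ^ 2 = 2 ^ n - 1 := by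
  have hsq : ∀ a, (expval ψ (nPauli a)).re ^ 2 = Complex.normSq (expval ψ (nPauli a)) := by
    intro a
    rw [Complex.normSq_apply, im_expval_eq_zero (nPauli_isHermitian a), sq, mul_zero, add_zero]
  rw [nonIdentityPaulis, filter_ne', sum_erase_eq_sub (mem_univ _)]
  simp only [hsq, sum_normSq_expval_nPauli, hψ, nPauli_zero, expval_one]
  norm_num

lemma outcomeProb_eq {J : Type*} [Fintype J] (w : J → ℝ) {ψ : J → (Fin n → Fin 2) → ℂ}
    (hψ : ∀ j, ∑ x, ‖ψ j x‖ ^ 2 = 1) (a : Fin n → Fin 4) (s : ℝ) (j : J) :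
    outcomeProb w ψ a s j = w j * (1 + s * (expval (ψ j) (nPauli a)).re) := by
  have h2 : ((2 : ℂ) ^ n)⁻¹ = (((2 : ℝ) ^ n)⁻¹ : ℝ) := by push_cast; rfl
  rw [outcomeProb, mixedPauliState, expval_smul, expval_add, expval_smul, expval_one, hψ j, h2,
    Complex.re_ofReal_mul, Complex.add_re, Complex.re_ofReal_mul, Complex.ofReal_re]
  field_simp

end nPauli_expval

lemma mul_log_le_mul_sub_one {u : ℝ} (hu : 0 ≤ u) : u * log u ≤ u * (u - 1) := by
  rcases hu.eq_or_lt with rfl | hu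
  · simp
  · exact mul_le_mul_of_nonneg_left (log_le_sub_one_of_pos hu) hu.le

lemma mul_log_mul_sub_mul_log (w u : ℝ) :
    w * u * log (w * u) - w * u * log w = w * (u * log u) := by
  have h := negMulLog_mul w u
  simp only [negMulLog] at h
  linear_combination -h

lemma sum_one_neg_one (f : ℝ → ℝ) : ∑ s ∈ ({1, -1} : Finset ℝ), f s = f 1 + f (-1) :=
  sum_pair (by norm_num)

section signedMutualInfo

variable {α J : Type*}

noncomputable def outcomeMarginal (A : Finset α) (p : α → ℝ → J → ℝ) (j : J) : ℝ :=
  (2 * (#A : ℝ))⁻¹ * ∑ a ∈ A, ∑ s ∈ ({1, -1} : Finset ℝ), p a s j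

/-- Mutual information between a label `(a, s)`, uniform on `A × {1, -1}`, and an outcome drawn
from `p a s`. -/
noncomputable def signedMutualInfo [Fintype J] (A : Finset α) (p : α → ℝ → J → ℝ) : ℝ :=
  (2 * (#A : ℝ))⁻¹ * ∑ a ∈ A, ∑ s ∈ ({1, -1} : Finset ℝ), ∑ j, p a s j * log (p a s j) -
    ∑ j, outcomeMarginal A p j * log (outcomeMarginal A p j)

variable {A : Finset α} {p : α → ℝ → J → ℝ} {w : J → ℝ} {r : J → α → ℝ}

lemma outcomeMarginal_eq (hA : A.Nonempty) (hp : ∀ a s j, p a s j = w j * (1 + s * r j a)) (j : J) :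
    outcomeMarginal A p j = w j := by
  have hA' : (#A : ℝ) ≠ 0 := by exact_mod_cast hA.card_ne_zero
  simp only [outcomeMarginal, sum_one_neg_one, hp]
  rw [sum_congr rfl fun a _ => show w j * (1 + 1 * r j a) + w j * (1 + -1 * r j a) = 2 * w j by
    ring, sum_const, nsmul_eq_mul]
  field_simp

lemma signedMutualInfo_le [Fintype J] (hA : A.Nonempty) (hw0 : ∀ j, 0 ≤ w j)
    (hr : ∀ j, ∀ a ∈ A, |r j a| ≤ 1) (hp : ∀ a s j, p a s j = w j * (1 + s * r j a)) :
    signedMutualInfo A p ≤ (#A : ℝ)⁻¹ * ∑ j, w j * ∑ a ∈ A, r j a ^ 2 := by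
  have hentropy : ∑ j, w j * log (w j) =
      (2 * (#A : ℝ))⁻¹ * ∑ a ∈ A, ∑ s ∈ ({1, -1} : Finset ℝ), ∑ j, p a s j * log (w j) := by
    calc ∑ j, w j * log (w j) = ∑ j, outcomeMarginal A p j * log (w j) := by
          simp only [outcomeMarginal_eq hA hp]
      _ = (2 * (#A : ℝ))⁻¹ * ∑ a ∈ A, ∑ s ∈ ({1, -1} : Finset ℝ), ∑ j, p a s j * log (w j) := by
          simp only [outcomeMarginal, mul_assoc, sum_mul, ← mul_sum]
          rw [sum_comm]
          congr 1
          exact sum_congr rfl fun a _ => sum_comm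
  have hterm : ∀ a ∈ A, ∀ s ∈ ({1, -1} : Finset ℝ), ∀ j,
      p a s j * log (p a s j) - p a s j * log (w j) ≤ w j * ((1 + s * r j a) * (s * r j a)) := by
    intro a ha s hs j
    have hu : 0 ≤ 1 + s * r j a := by
      rcases (by simpa using hs : s = 1 ∨ s = -1) with rfl | rfl <;>
        linarith [abs_le.mp (hr j a ha)]
    rw [hp, mul_log_mul_sub_mul_log]
    calc w j * ((1 + s * r j a) * log (1 + s * r j a))
        ≤ w j * ((1 + s * r j a) * (1 + s * r j a - 1)) :=
          mul_le_mul_of_nonneg_left (mul_log_le_mul_sub_one hu) (hw0 j)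
      _ = w j * ((1 + s * r j a) * (s * r j a)) := by ring
  calc signedMutualInfo A p
      = (2 * (#A : ℝ))⁻¹ * ∑ a ∈ A, ∑ s ∈ ({1, -1} : Finset ℝ), ∑ j,
          (p a s j * log (p a s j) - p a s j * log (w j)) := by
        simp only [signedMutualInfo, outcomeMarginal_eq hA hp, hentropy, ← mul_sub, ← sum_sub_distrib]
    _ ≤ (2 * (#A : ℝ))⁻¹ * ∑ a ∈ A, ∑ s ∈ ({1, -1} : Finset ℝ), ∑ j,
          w j * ((1 + s * r j a) * (s * r j a)) := by
        gcongr with a ha s hs j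
        exact hterm a ha s hs j
    _ = (#A : ℝ)⁻¹ * ∑ j, w j * ∑ a ∈ A, r j a ^ 2 := by
        simp only [sum_one_neg_one, ← sum_add_distrib, mul_sum]
        rw [sum_comm]
        exact sum_congr rfl fun j _ => sum_congr rfl fun a _ => by ring

end signedMutualInfo

theorem single_copy_mutual_information_bound_general {n : ℕ} (hn : 0 < n)
    {J : Type*} [Fintype J] (w : J → ℝ) (ψ : J → (Fin n → Fin 2) → ℂ)
    (hw0 : ∀ j, 0 ≤ w j) (hw1 : ∑ j, w j = 1)
    (hψ : ∀ j, ∑ x, ‖ψ j x‖ ^ 2 = 1) :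
    (((2 : ℝ) * (4 ^ n - 1))⁻¹ *
        ∑ a ∈ Finset.univ.filter (fun a : Fin n → Fin 4 => a ≠ fun _ => 0),
          ∑ s ∈ ({1, -1} : Finset ℝ),
            ∑ j, outcomeProb w ψ a s j * Real.log (outcomeProb w ψ a s j)) -
      ∑ j, (((2 : ℝ) * (4 ^ n - 1))⁻¹ *
          ∑ a ∈ Finset.univ.filter (fun a : Fin n → Fin 4 => a ≠ fun _ => 0),
            ∑ s ∈ ({1, -1} : Finset ℝ), outcomeProb w ψ a s j) *
        Real.log (((2 : ℝ) * (4 ^ n - 1))⁻¹ *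
          ∑ a ∈ Finset.univ.filter (fun a : Fin n → Fin 4 => a ≠ fun _ => 0),
            ∑ s ∈ ({1, -1} : Finset ℝ), outcomeProb w ψ a s j) ≤
      1 / (2 ^ n + 1) := by
  rw [← card_nonIdentityPaulis n]
  change signedMutualInfo (nonIdentityPaulis n) (outcomeProb w ψ) ≤ _
  have h4 : (4 : ℝ) ^ n = (2 ^ n) ^ 2 := by rw [← pow_mul, mul_comm, pow_mul]; norm_num
  have h2n : (2 : ℝ) ^ n - 1 ≠ 0 := by linarith [one_lt_pow₀ (by norm_num : (1 : ℝ) < 2) hn.ne']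
  calc signedMutualInfo (nonIdentityPaulis n) (outcomeProb w ψ)
      ≤ (#(nonIdentityPaulis n) : ℝ)⁻¹ *
          ∑ j, w j * ∑ a ∈ nonIdentityPaulis n, (expval (ψ j) (nPauli a)).re ^ 2 :=
        signedMutualInfo_le (nonIdentityPaulis_nonempty hn) hw0
          (fun j a _ => abs_re_expval_nPauli_le (hψ j) a) (outcomeProb_eq w hψ)
    _ = ((2 ^ n - 1) * (2 ^ n + 1))⁻¹ * (2 ^ n - 1) := by
        rw [card_nonIdentityPaulis, h4]
        simp only [sum_nonIdentityPaulis_re_expval_sq (hψ _), ← sum_mul, hw1, one_mul]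
        ring
    _ = 1 / (2 ^ n + 1) := by
        field_simp

/-- The mutual information between the uniformly random label `(a,s)` (over the
`2(4ⁿ−1)` non-identity Paulis and signs) and the outcome of any rank-one POVM
`{w_j 2ⁿ |ψ_j⟩⟨ψ_j|}` on a single copy of `ρ_{(a,s)} = (I + sP_a)/2ⁿ` is at most
`1/(2ⁿ + 1)` (natural logarithm). -/
theorem single_copy_mutual_information_bound {n : ℕ} (hn : 0 < n)
    {J : Type*} [Fintype J] (w : J → ℝ) (ψ : J → (Fin n → Fin 2) → ℂ)
    (hw0 : ∀ j, 0 ≤ w j) (hw1 : ∑ j, w j = 1)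
    (hψ : ∀ j, ∑ x, ‖ψ j x‖ ^ 2 = 1)
    (hPOVM : ∑ j, ((w j : ℂ) * 2 ^ n) •
        Matrix.vecMulVec (ψ j) (fun x => (starRingEnd ℂ) (ψ j x)) = 1) :
    (((2 : ℝ) * (4 ^ n - 1))⁻¹ *
        ∑ a ∈ Finset.univ.filter (fun a : Fin n → Fin 4 => a ≠ fun _ => 0),
          ∑ s ∈ ({1, -1} : Finset ℝ),
            ∑ j, outcomeProb w ψ a s j * Real.log (outcomeProb w ψ a s j)) -
      ∑ j, (((2 : ℝ) * (4 ^ n - 1))⁻¹ *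
          ∑ a ∈ Finset.univ.filter (fun a : Fin n → Fin 4 => a ≠ fun _ => 0),
            ∑ s ∈ ({1, -1} : Finset ℝ), outcomeProb w ψ a s j) *
        Real.log (((2 : ℝ) * (4 ^ n - 1))⁻¹ *
          ∑ a ∈ Finset.univ.filter (fun a : Fin n → Fin 4 => a ≠ fun _ => 0),
            ∑ s ∈ ({1, -1} : Finset ℝ), outcomeProb w ψ a s j) ≤
      1 / (2 ^ n + 1) :=
  single_copy_mutual_information_bound_general hn w ψ hw0 hw1 hψ
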